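/- For every maximal chain T in the RNNI graph on n leaves there exists a caterpillar chain R with d(T,R) = (n−1)(n−2)/2. Consequently, every vertex of the RNNI graph has eccentricity (n−1)(n−2)/2, and the radius of the RNNI graph equals its diameter (n−1)(n−2)/2. -/

import Mathlib

/-- A maximal chain in the partition lattice of `Fin n`: a sequence
`P 0 < P 1 < … < P (n-1)` of partitions (modeled as setoids, ordered by refinement),
starting at the discrete partition `⊥`, ending at the trivial partition `⊤`,
each step being a covering step (merging exactly two blocks).
We index by `ℕ` and require the chain to be constantly `⊤` from index `n-1` on. -/
structure RChain (n : ℕ) where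
  P : ℕ → Setoid (Fin n)
  first : P 0 = ⊥
  last : ∀ i, n - 1 ≤ i → P i = ⊤
  step : ∀ i, i < n - 1 → P i ⋖ P (i + 1)

/-- The RNNI graph on `n` leaves: vertices are maximal chains in the partition
lattice of `Fin n`, two chains being adjacent iff they differ in exactly one partition. -/
def RNNI (n : ℕ) : SimpleGraph (RChain n) where
  Adj T R := ∃! i : ℕ, T.P i ≠ R.P i
  symm := by
    constructor
    rintro T R ⟨i, hi, hu⟩
    exact ⟨i, hi.symm, fun j hj => hu j hj.symm⟩
  loopless := by
    constructor
    rintro T ⟨i, hi, -⟩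
    exact hi rfl

/-- `C` is a cluster of the chain `T` if it is a block (equivalence class)
of some partition of the chain. -/
def IsCluster {n : ℕ} (T : RChain n) (C : Set (Fin n)) : Prop :=
  ∃ i, C ∈ (T.P i).classes

/-- A chain is a caterpillar chain if any two of its non-singleton clusters are
comparable under inclusion. -/
def IsCaterpillar {n : ℕ} (T : RChain n) : Prop :=
  ∀ C D : Set (Fin n), IsCluster T C → IsCluster T D →
    ¬ C.Subsingleton → ¬ D.Subsingleton → (C ⊆ D ∨ D ⊆ C)

/-- For a caterpillar chain `T`, `rk T a` is the least index `i` such that the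
block of `a` in `P i` is not a singleton (necessarily `i ≥ 1`). -/
noncomputable def rk {n : ℕ} (T : RChain n) (a : Fin n) : ℕ :=
  sInf {i | ∃ b, b ≠ a ∧ (T.P i) a b}

/-- A DCT vertex: a maximal chain on the ground set `Fin (m+2)` (representing
`{1, …, m+2}`, with `a_i ↦ i - 1`) having the set `{1, …, n}` and each of the sets
`B_k = {n+1, …, n+1+k}`, `k = 1, …, m+1-n`, as clusters. -/
def IsDCT (n m : ℕ) (X : RChain (m + 2)) : Prop :=
  IsCluster X {x | x.val < n} ∧
  ∀ k, 1 ≤ k → k ≤ m + 1 - n → IsCluster X {x | n ≤ x.val ∧ x.val ≤ n + k}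

/-- The subgraph of the RNNI graph induced on the DCT vertices. -/
def DCTGraph (n m : ℕ) : SimpleGraph {Z : RChain (m + 2) // IsDCT n m Z} :=
  SimpleGraph.comap Subtype.val (RNNI (m + 2))

/-- A caterpillar DCT vertex: a DCT vertex whose non-singleton clusters contained in
`{1, …, n}` are pairwise comparable under inclusion. -/
def IsCatDCT (n m : ℕ) (X : RChain (m + 2)) : Prop :=
  IsDCT n m X ∧
  ∀ C D : Set (Fin (m + 2)), IsCluster X C → IsCluster X D →
    C ⊆ {x | x.val < n} → D ⊆ {x | x.val < n} →
    ¬ C.Subsingleton → ¬ D.Subsingleton → (C ⊆ D ∨ D ⊆ C)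

/-!
Upper bound: if `T` and `R` agree up to index `k` and `R` merges `a` and `b` at step `k + 1`,
then moving the merge of `a` and `b` in `T` down one step at a time takes at most `n - 2 - k`
RNNI moves and makes `T` agree with `R` up to `k + 1`; summing over `k` gives `(n - 1).choose 2`.

Lower bound: deleting a leaf `x` maps each RNNI move either to at most one move on the remaining
leaves or, exclusively, to a shift by one of the step `rk T x` at which `x` is merged. Given `T`,
delete a leaf `a` merged at the first step, take by induction a caterpillar `R'` at distance
`(n - 2).choose 2` from the reduced chain, and insert `a` into `R'` at the last step: the resulting
caterpillar is at distance at least `(n - 2).choose 2 + (n - 2) = (n - 1).choose 2` from `T`.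
-/

namespace Setoid

section Merge

variable {α : Type*}

def merge (a b : α) (s : Setoid α) : Setoid α where
  r x y := s x y ∨ (s x a ∧ s b y) ∨ (s x b ∧ s a y)
  iseqv := by
    refine ⟨fun x => Or.inl (s.refl' x), ?_, ?_⟩
    · rintro x y (h | ⟨h₁, h₂⟩ | ⟨h₁, h₂⟩)
      · exact Or.inl (s.symm' h)
      · exact Or.inr (Or.inr ⟨s.symm' h₂, s.symm' h₁⟩)
      · exact Or.inr (Or.inl ⟨s.symm' h₂, s.symm' h₁⟩)
    · rintro x y z (h | ⟨h₁, h₂⟩ | ⟨h₁, h₂⟩) (h' | ⟨h₁', h₂'⟩ | ⟨h₁', h₂'⟩)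
        <;>
        first
        | exact Or.inl (s.trans' h h')
        | exact Or.inl (s.trans' h₁ h₂')
        | exact Or.inl (s.trans' h₁ (s.trans' (s.symm' h₁') (s.trans' (s.symm' h₂) h₂')))
        | exact Or.inr (Or.inl ⟨s.trans' h h₁', h₂'⟩)
        | exact Or.inr (Or.inr ⟨s.trans' h h₁', h₂'⟩)
        | exact Or.inr (Or.inl ⟨h₁, s.trans' h₂ h'⟩)
        | exact Or.inr (Or.inr ⟨h₁, s.trans' h₂ h'⟩)

variable {a b c d x y z : α} {s t u : Setoid α}

theorem merge_rel : merge a b s x y ↔ s x y ∨ (s x a ∧ s b y) ∨ (s x b ∧ s a y) := Iff.rfl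

theorem le_merge : s ≤ merge a b s := fun _ _ => Or.inl

theorem merge_rel_self : merge a b s a b := Or.inr (Or.inl ⟨s.refl' a, s.refl' b⟩)

theorem merge_le_iff : merge a b s ≤ u ↔ s ≤ u ∧ u a b := by
  refine ⟨fun h => ⟨le_merge.trans h, h merge_rel_self⟩, ?_⟩
  rintro ⟨hs, hab⟩ x y (h | ⟨h₁, h₂⟩ | ⟨h₁, h₂⟩)
  · exact hs h
  · exact u.trans' (hs h₁) (u.trans' hab (hs h₂))
  · exact u.trans' (hs h₁) (u.trans' (u.symm' hab) (hs h₂))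

theorem merge_comm (a b : α) (s : Setoid α) : merge a b s = merge b a s :=
  le_antisymm (merge_le_iff.2 ⟨le_merge, Setoid.symm' _ merge_rel_self⟩)
    (merge_le_iff.2 ⟨le_merge, Setoid.symm' _ merge_rel_self⟩)

theorem merge_merge_comm : merge a b (merge c d s) = merge c d (merge a b s) :=
  le_antisymm
    (merge_le_iff.2 ⟨merge_le_iff.2 ⟨le_merge.trans le_merge, merge_rel_self⟩,
      le_merge merge_rel_self⟩)
    (merge_le_iff.2 ⟨merge_le_iff.2 ⟨le_merge.trans le_merge, merge_rel_self⟩,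
      le_merge merge_rel_self⟩)

theorem merge_congr_left (h : s a c) : merge a b s = merge c b s :=
  le_antisymm (merge_le_iff.2 ⟨le_merge, (merge c b s).trans' (Or.inl h) merge_rel_self⟩)
    (merge_le_iff.2 ⟨le_merge, (merge a b s).trans' (Or.inl (s.symm' h)) merge_rel_self⟩)

theorem covBy_merge (h : ¬ s a b) : s ⋖ merge a b s := by
  refine ⟨lt_of_le_of_ne le_merge fun he => h (he ▸ merge_rel_self), fun u hsu hu => ?_⟩
  obtain ⟨x, y, hxy, hnxy⟩ : ∃ x y, u x y ∧ ¬ s x y := by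
    by_contra! hc
    exact hsu.not_ge fun x y => hc x y
  refine hu.not_ge (merge_le_iff.2 ⟨hsu.le, ?_⟩)
  rcases hu.le hxy with h' | ⟨h₁, h₂⟩ | ⟨h₁, h₂⟩
  · exact absurd h' hnxy
  · exact u.trans' (u.symm' (hsu.le h₁)) (u.trans' hxy (u.symm' (hsu.le h₂)))
  · exact u.symm' (u.trans' (u.symm' (hsu.le h₁)) (u.trans' hxy (u.symm' (hsu.le h₂))))

theorem eq_merge_of_covBy (h : s ⋖ t) (hn : ¬ s a b) (ht : t a b) : t = merge a b s :=
  ((merge_le_iff.2 ⟨h.le, ht⟩).lt_or_eq.resolve_left (h.2 (covBy_merge hn).lt)).symm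

theorem exists_eq_merge_of_covBy (h : s ⋖ t) : ∃ a b, ¬ s a b ∧ t = merge a b s := by
  obtain ⟨a, b, hab, hnab⟩ : ∃ a b, t a b ∧ ¬ s a b := by
    by_contra! hc
    exact h.lt.not_ge fun x y => hc x y
  exact ⟨a, b, hnab, eq_merge_of_covBy h hnab hab⟩

theorem merge_eq_merge_of_rel (hn : ¬ s a b) (h : merge c d s a b) :
    merge c d s = merge a b s :=
  have hcd : ¬ s c d := fun hcd => hn (merge_le_iff.2 ⟨le_rfl, hcd⟩ h)
  ((merge_le_iff.2 ⟨le_merge, h⟩).lt_or_eq.resolve_left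
    ((covBy_merge hcd).2 (covBy_merge hn).lt)).symm

def IsSingletonBlock (s : Setoid α) (x : α) : Prop := ∀ y, s x y → y = x

theorem not_isSingletonBlock_top [Nontrivial α] (x : α) :
    ¬ (⊤ : Setoid α).IsSingletonBlock x := fun h =>
  (exists_ne x).elim fun y hy => hy (h y trivial)

theorem rel_of_covBy_top_of_isSingletonBlock (hcov : s ⋖ ⊤) (hx : s.IsSingletonBlock x)
    (hy : y ≠ x) (hz : z ≠ x) : s y z := by
  have : merge x y s z y := eq_merge_of_covBy hcov (fun h => hy (hx y h)) trivial ▸ trivial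
  rcases this with h | ⟨h₁, -⟩ | ⟨h₁, -⟩
  · exact s.symm' h
  · exact absurd (hx z (s.symm' h₁)) hz
  · exact s.symm' h₁

theorem comap_top {β : Type*} (f : α → β) : (⊤ : Setoid β).comap f = ⊤ :=
  ext fun _ _ => Iff.rfl

theorem eq_univ_of_mem_classes_top {C : Set α} (h : C ∈ (⊤ : Setoid α).classes) :
    C = Set.univ := by
  obtain ⟨y, rfl⟩ := h
  exact Set.eq_univ_of_forall fun _ => trivial

theorem subsingleton_of_mem_classes_bot {C : Set α} (h : C ∈ (⊥ : Setoid α).classes) :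
    C.Subsingleton := by
  obtain ⟨y, rfl⟩ := h
  exact Set.subsingleton_of_subset_singleton fun _ h => h

end Merge

section SuccAbove

variable {m : ℕ} (x : Fin (m + 1)) {s t : Setoid (Fin (m + 1))}

theorem comap_succAbove_bot : (⊥ : Setoid (Fin (m + 1))).comap x.succAbove = ⊥ :=
  ext fun _ _ => x.succAbove_right_injective.eq_iff

theorem comap_succAbove_merge_of_isSingletonBlock (hs : s.IsSingletonBlock x) (v : Fin (m + 1)) :
    (merge x v s).comap x.succAbove = s.comap x.succAbove := by
  refine ext fun u w => ⟨?_, Or.inl⟩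
  rintro (h | ⟨h₁, -⟩ | ⟨-, h₂⟩)
  · exact h
  · exact absurd (hs _ (s.symm' h₁)) (x.succAbove_ne u)
  · exact absurd (hs _ h₂) (x.succAbove_ne w)

theorem comap_succAbove_covBy_merge {a b : Fin (m + 1)} (hab : ¬ s a b) (ha : a ≠ x)
    (hb : b ≠ x) : s.comap x.succAbove ⋖ (merge a b s).comap x.succAbove := by
  obtain ⟨a, rfl⟩ := Fin.exists_succAbove_eq ha
  obtain ⟨b, rfl⟩ := Fin.exists_succAbove_eq hb
  exact covBy_merge hab

theorem comap_succAbove_covBy_of_isSingletonBlock (hcov : s ⋖ t) (ht : t.IsSingletonBlock x) :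
    s.comap x.succAbove ⋖ t.comap x.succAbove := by
  obtain ⟨a, b, hab, rfl⟩ := exists_eq_merge_of_covBy hcov
  refine comap_succAbove_covBy_merge x hab ?_ ?_
  · rintro rfl
    exact hab (ht b merge_rel_self ▸ s.refl' _)
  · rintro rfl
    exact hab (ht a (Setoid.symm' _ merge_rel_self) ▸ s.refl' _)

theorem comap_succAbove_eq_of_covBy (hcov : s ⋖ t) (hs : s.IsSingletonBlock x)
    (ht : ¬ t.IsSingletonBlock x) : s.comap x.succAbove = t.comap x.succAbove := by
  obtain ⟨a, b, hab, rfl⟩ := exists_eq_merge_of_covBy hcov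
  obtain ⟨y, hy, hyx⟩ : ∃ y, merge a b s x y ∧ y ≠ x := by
    simpa [IsSingletonBlock] using ht
  rcases hy with h | ⟨h, -⟩ | ⟨h, -⟩
  · exact absurd (hs y h) hyx
  · rw [hs a h, comap_succAbove_merge_of_isSingletonBlock x hs]
  · rw [hs b h, merge_comm, comap_succAbove_merge_of_isSingletonBlock x hs]

theorem comap_succAbove_covBy_of_not_isSingletonBlock (hcov : s ⋖ t)
    (hs : ¬ s.IsSingletonBlock x) : s.comap x.succAbove ⋖ t.comap x.succAbove := by
  obtain ⟨a, b, hab, rfl⟩ := exists_eq_merge_of_covBy hcov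
  obtain ⟨w, hw, hwx⟩ : ∃ w, s x w ∧ w ≠ x := by
    simpa [IsSingletonBlock] using hs
  -- a merge involving `x` is also a merge of its block-mate `w`
  rcases eq_or_ne a x with rfl | ha
  · rw [merge_congr_left hw]
    exact comap_succAbove_covBy_merge a (fun h => hab (s.trans' hw h)) hwx
      (fun hb => hab (hb ▸ s.refl' _))
  rcases eq_or_ne b x with rfl | hb
  · rw [merge_comm, merge_congr_left hw]
    exact comap_succAbove_covBy_merge b (fun h => hab (s.symm' (s.trans' hw h))) hwx ha
  exact comap_succAbove_covBy_merge x hab ha hb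

end SuccAbove

section InsertNth

variable {m : ℕ} (x : Fin (m + 1)) {s t : Setoid (Fin m)}

/-- The partition with block `{x}` inducing `s` on the other points, as the kernel of the map
sending `x` to `none` and every other point to its class in `s`. -/
def insertNth (s : Setoid (Fin m)) : Setoid (Fin (m + 1)) :=
  ker (Fin.insertNth (α := fun _ => Option (Quotient s)) x none fun u => some (Quotient.mk s u))

@[simp]
theorem insertNth_rel_succAbove {u v : Fin m} :
    insertNth x s (x.succAbove u) (x.succAbove v) ↔ s u v := by
  unfold insertNth
  rw [ker_def]
  simp [Quotient.eq]

@[simp]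
theorem insertNth_rel_self_left {y : Fin (m + 1)} : insertNth x s x y ↔ y = x := by
  rcases eq_or_ne y x with rfl | hy
  · simp
  · obtain ⟨u, rfl⟩ := Fin.exists_succAbove_eq hy
    unfold insertNth
    rw [ker_def]
    simp

@[simp]
theorem insertNth_rel_self_right {y : Fin (m + 1)} : insertNth x s y x ↔ y = x :=
  ⟨fun h => (insertNth_rel_self_left x).1 (Setoid.symm' _ h), fun h => h ▸ Setoid.refl' _ _⟩

theorem isSingletonBlock_insertNth (s : Setoid (Fin m)) : (insertNth x s).IsSingletonBlock x :=
  fun _ => (insertNth_rel_self_left x).1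

theorem insertNth_bot : insertNth x (⊥ : Setoid (Fin m)) = ⊥ := by
  refine ext fun y z => ?_
  rcases eq_or_ne y x with rfl | hy
  · simp [eq_comm]
  rcases eq_or_ne z x with rfl | hz
  · simp
  obtain ⟨u, rfl⟩ := Fin.exists_succAbove_eq hy
  obtain ⟨v, rfl⟩ := Fin.exists_succAbove_eq hz
  simp [x.succAbove_right_injective.eq_iff]

theorem comap_insertNth (s : Setoid (Fin m)) : (insertNth x s).comap x.succAbove = s :=
  ext fun _ _ => insertNth_rel_succAbove x

theorem insertNth_merge (s : Setoid (Fin m)) (a b : Fin m) :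
    insertNth x (merge a b s) = merge (x.succAbove a) (x.succAbove b) (insertNth x s) := by
  refine ext fun y z => ?_
  rcases eq_or_ne y x with rfl | hy
  · simp [merge_rel]
  rcases eq_or_ne z x with rfl | hz
  · simp [merge_rel]
  obtain ⟨u, rfl⟩ := Fin.exists_succAbove_eq hy
  obtain ⟨v, rfl⟩ := Fin.exists_succAbove_eq hz
  simp [merge_rel]

theorem insertNth_covBy (h : s ⋖ t) : insertNth x s ⋖ insertNth x t := by
  obtain ⟨a, b, hab, rfl⟩ := exists_eq_merge_of_covBy h
  rw [insertNth_merge]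
  exact covBy_merge ((insertNth_rel_succAbove x).not.2 hab)

theorem insertNth_top_covBy (hm : 0 < m) : insertNth x (⊤ : Setoid (Fin m)) ⋖ ⊤ := by
  set w := x.succAbove ⟨0, hm⟩
  have hwx : w ≠ x := x.succAbove_ne _
  suffices (⊤ : Setoid (Fin (m + 1))) = merge x w (insertNth x ⊤) from
    this ▸ covBy_merge (by simpa using hwx)
  have hw : ∀ y, y ≠ x → insertNth x ⊤ y w := by
    intro y hy
    obtain ⟨u, rfl⟩ := Fin.exists_succAbove_eq hy
    exact (insertNth_rel_succAbove x).2 trivial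
  refine (eq_top_iff.2 fun y z => ?_).symm
  rcases eq_or_ne y x with rfl | hy
  · rcases eq_or_ne z y with rfl | hz
    · exact Setoid.refl' _ _
    · exact Or.inr (Or.inl ⟨Setoid.refl' _ _, Setoid.symm' _ (hw z hz)⟩)
  rcases eq_or_ne z x with rfl | hz
  · exact Or.inr (Or.inr ⟨hw y hy, Setoid.refl' _ _⟩)
  · exact Or.inl (Setoid.trans' _ (hw y hy) (Setoid.symm' _ (hw z hz)))

theorem mem_classes_insertNth {C : Set (Fin (m + 1))} (h : C ∈ (insertNth x s).classes) :
    C = {x} ∨ ∃ D ∈ s.classes, C = x.succAbove '' D := by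
  obtain ⟨y, rfl⟩ := h
  rcases eq_or_ne y x with rfl | hy
  · exact Or.inl (Set.ext fun z => insertNth_rel_self_right y)
  obtain ⟨v, rfl⟩ := Fin.exists_succAbove_eq hy
  refine Or.inr ⟨_, s.mem_classes v, Set.ext fun z => ?_⟩
  rcases eq_or_ne z x with rfl | hz
  · simp [Fin.succAbove_ne]
  obtain ⟨u, rfl⟩ := Fin.exists_succAbove_eq hz
  simp [x.succAbove_right_injective.eq_iff]

end InsertNth

end Setoid

namespace RChain

variable {n : ℕ}

theorem ext_P {T R : RChain n} (h : T.P = R.P) : T = R := by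
  cases T; cases R; cases h; rfl

theorem monotone (T : RChain n) : Monotone T.P := by
  refine monotone_nat_of_le_succ fun i => ?_
  by_cases hi : i < n - 1
  · exact (T.step i hi).le
  · rw [T.last i (by omega), T.last (i + 1) (by omega)]

theorem eq_of_forall_le_sub_two {T R : RChain n} (h : ∀ i ≤ n - 2, T.P i = R.P i) : T = R := by
  refine ext_P (funext fun i => ?_)
  by_cases hi : i ≤ n - 2
  · exact h i hi
  · rw [T.last i (by omega), R.last i (by omega)]

def update (T : RChain n) (i : ℕ) (Q : Setoid (Fin n)) (hi : i + 2 < n) (hlo : T.P i ⋖ Q)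
    (hhi : Q ⋖ T.P (i + 2)) : RChain n where
  P := Function.update T.P (i + 1) Q
  first := by rw [Function.update_of_ne (by omega), T.first]
  last j hj := by rw [Function.update_of_ne (by omega), T.last j hj]
  step j hj := by
    rcases lt_trichotomy j i with hji | rfl | hij
    · rw [Function.update_of_ne (by omega), Function.update_of_ne (by omega)]
      exact T.step j hj
    · rw [Function.update_of_ne (by omega), Function.update_self]
      exact hlo
    · rcases eq_or_ne j (i + 1) with rfl | hj'
      · rw [Function.update_self, Function.update_of_ne (by omega)]
        exact hhi
      · rw [Function.update_of_ne hj', Function.update_of_ne (by omega)]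
        exact T.step j hj


section Rank

variable (T : RChain n) {x : Fin n}

theorem not_isSingletonBlock_last (hn : 2 ≤ n) : ¬ (T.P (n - 1)).IsSingletonBlock x := by
  have : Nontrivial (Fin n) := Fin.nontrivial_iff_two_le.2 hn
  rw [T.last (n - 1) le_rfl]
  exact Setoid.not_isSingletonBlock_top x

theorem rk_le_iff (hn : 2 ≤ n) {i : ℕ} : rk T x ≤ i ↔ ¬ (T.P i).IsSingletonBlock x := by
  have hS : ∀ j, j ∈ {j | ∃ y, y ≠ x ∧ T.P j x y} ↔ ¬ (T.P j).IsSingletonBlock x := by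
    simp [Setoid.IsSingletonBlock, and_comm]
  refine ⟨fun h => ?_, fun h => Nat.sInf_le ((hS i).2 h)⟩
  have hne : {j | ∃ y, y ≠ x ∧ T.P j x y}.Nonempty :=
    ⟨n - 1, (hS _).2 (T.not_isSingletonBlock_last hn)⟩
  obtain ⟨y, hy, hxy⟩ := Nat.sInf_mem hne
  exact (hS i).1 ⟨y, hy, T.monotone h hxy⟩

theorem lt_rk_iff (hn : 2 ≤ n) {i : ℕ} : i < rk T x ↔ (T.P i).IsSingletonBlock x := by
  rw [← not_le, rk_le_iff T hn, not_not]

theorem rk_pos (hn : 2 ≤ n) : 0 < rk T x :=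
  (lt_rk_iff T hn).2 fun _ h => by
    rw [T.first] at h
    exact h.symm

theorem rk_le_sub_one (hn : 2 ≤ n) : rk T x ≤ n - 1 :=
  (rk_le_iff T hn).2 (T.not_isSingletonBlock_last hn)

theorem rk_eq_rk_of_forall_isSingletonBlock_iff (hn : 2 ≤ n) {T' : RChain n}
    (h : ∀ i, (T.P i).IsSingletonBlock x ↔ (T'.P i).IsSingletonBlock x) : rk T x = rk T' x :=
  eq_of_forall_ge_iff fun i => by rw [T.rk_le_iff hn, T'.rk_le_iff hn, h]

end Rank

end RChain

namespace RNNI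

variable {n : ℕ}

theorem adj_update (T : RChain n) {i : ℕ} {Q : Setoid (Fin n)} {hi hlo hhi}
    (hQ : Q ≠ T.P (i + 1)) : (RNNI n).Adj T (T.update i Q hi hlo hhi) := by
  refine ⟨i + 1, ?_, fun j hj => ?_⟩
  · simpa [RChain.update] using hQ.symm
  · by_contra hne
    exact hj (Function.update_of_ne hne _ _).symm

theorem exists_of_adj {T T' : RChain n} (h : (RNNI n).Adj T T') :
    ∃ t, 1 ≤ t ∧ ∀ i ≠ t, T.P i = T'.P i := by
  obtain ⟨t, hne, huniq⟩ := h
  refine ⟨t, Nat.pos_of_ne_zero ?_, fun i hi => not_not.1 fun h => hi (huniq i h)⟩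
  rintro rfl
  exact hne (T.first.trans T'.first.symm)

theorem eq_or_adj_of_subsingleton {T T' : RChain n}
    (h : {i | T.P i ≠ T'.P i}.Subsingleton) : T = T' ∨ (RNNI n).Adj T T' := by
  by_cases heq : ∀ i, T.P i = T'.P i
  · exact Or.inl (RChain.ext_P (funext heq))
  · push Not at heq
    obtain ⟨i, hi⟩ := heq
    exact Or.inr ⟨i, hi, fun j hj => h hj hi⟩

theorem exists_adj_rel_of_rel_succ {T : RChain n} {i : ℕ} {a b : Fin n}
    (hn : ¬ T.P (i + 1) a b) (h : T.P (i + 2) a b) :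
    ∃ T', (RNNI n).Adj T T' ∧ (∀ j ≠ i + 1, T'.P j = T.P j) ∧ T'.P (i + 1) a b := by
  have hi : i + 2 < n := by
    by_contra hi
    exact hn (T.last (i + 1) (by omega) ▸ trivial)
  obtain ⟨c, e, hce, hPc⟩ := Setoid.exists_eq_merge_of_covBy (T.step i (by omega))
  have hPab : T.P (i + 2) = (T.P (i + 1)).merge a b :=
    Setoid.eq_merge_of_covBy (T.step (i + 1) (by omega)) hn h
  -- merge `a` and `b` right after `T.P i`, before the merge of `c` and `e`
  set Q := (T.P i).merge a b
  have hQ : Q a b := Setoid.merge_rel_self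
  have hQce : ¬ Q c e := fun hc => hn <| by
    rw [hPc, ← Setoid.merge_eq_merge_of_rel hce hc]
    exact hQ
  have hlo : T.P i ⋖ Q := Setoid.covBy_merge fun h' => hn (T.monotone (by omega) h')
  have hhi : Q ⋖ T.P (i + 2) := by
    rw [hPab, hPc, Setoid.merge_merge_comm]
    exact Setoid.covBy_merge hQce
  refine ⟨T.update i Q hi hlo hhi, adj_update T fun hc => hn (hc ▸ hQ), fun j hj => ?_, ?_⟩
  · exact Function.update_of_ne hj _ _
  · show Function.update T.P (i + 1) Q (i + 1) a b
    rwa [Function.update_self]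

theorem exists_edist_le_rel_succ_of_rel_add {a b : Fin n} (k : ℕ) :
    ∀ (m : ℕ) (T : RChain n), T.P (k + 1 + m) a b →
      ∃ T', (RNNI n).edist T T' ≤ m ∧ (∀ j ≤ k, T'.P j = T.P j) ∧ T'.P (k + 1) a b
  | 0, T, h => ⟨T, by simp, fun _ _ => rfl, h⟩
  | m + 1, T, h => by
    by_cases hm : T.P (k + 1 + m) a b
    · obtain ⟨T', hd, hT', hab⟩ := exists_edist_le_rel_succ_of_rel_add k m T hm
      exact ⟨T', hd.trans (by simp), hT', hab⟩
    obtain ⟨T'', hadj, hT'', hab''⟩ :=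
      exists_adj_rel_of_rel_succ (i := k + m) (by rwa [Nat.add_right_comm] at hm)
        (by rwa [show k + 1 + (m + 1) = k + m + 2 by ring] at h)
    obtain ⟨T', hd, hT', hab⟩ :=
      exists_edist_le_rel_succ_of_rel_add k m T'' (Nat.add_right_comm k 1 m ▸ hab'')
    refine ⟨T', ?_, fun j hj => (hT' j hj).trans (hT'' j (by omega)), hab⟩
    calc (RNNI n).edist T T' ≤ (RNNI n).edist T T'' + (RNNI n).edist T'' T' :=
          SimpleGraph.edist_triangle
      _ ≤ 1 + m := add_le_add (SimpleGraph.edist_le_one_iff_adj_or_eq.2 (Or.inl hadj)) hd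
      _ = (m + 1 : ℕ) := by push_cast; ring

theorem edist_le_choose_of_eqOn {T R : RChain n} {k : ℕ} (h : ∀ j ≤ k, T.P j = R.P j) :
    (RNNI n).edist T R ≤ (n - 1 - k).choose 2 := by
  obtain ⟨d, hd⟩ : ∃ d, n - 1 - k = d := ⟨_, rfl⟩
  induction d generalizing T k with
  | zero =>
    rw [RChain.eq_of_forall_le_sub_two fun j hj => h j (by omega)]
    simp
  | succ d ih =>
    by_cases hk : n - 2 ≤ k
    · rw [RChain.eq_of_forall_le_sub_two fun j hj => h j (by omega)]
      simp
    obtain ⟨a, b, hab, hR⟩ := Setoid.exists_eq_merge_of_covBy (R.step k (by omega))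
    obtain ⟨T', hTT', hT', hab'⟩ := exists_edist_le_rel_succ_of_rel_add (a := a) (b := b) k d T
      (T.last (k + 1 + d) (by omega) ▸ trivial)
    have hT'R : ∀ j ≤ k + 1, T'.P j = R.P j := by
      intro j hj
      rcases (Nat.le_succ_iff.1 hj) with hj | rfl
      · exact (hT' j hj).trans (h j hj)
      · have hk' : T'.P k = R.P k := (hT' k le_rfl).trans (h k le_rfl)
        rw [Setoid.eq_merge_of_covBy (T'.step k (by omega)) (hk' ▸ hab) hab', hk', hR]
    have hT'R' : (RNNI n).edist T' R ≤ d.choose 2 := by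
      simpa [show n - 1 - (k + 1) = d by omega] using ih hT'R (by omega)
    rw [hd]
    calc (RNNI n).edist T R ≤ (RNNI n).edist T T' + (RNNI n).edist T' R :=
          SimpleGraph.edist_triangle
      _ ≤ d + d.choose 2 := add_le_add hTT' hT'R'
      _ = (d + 1).choose 2 := by rw [Nat.choose_succ_succ, Nat.choose_one_right]; push_cast; rfl

theorem edist_le (T R : RChain n) : (RNNI n).edist T R ≤ (n - 1).choose 2 := by
  simpa using edist_le_choose_of_eqOn (k := 0) fun j hj => by
    rw [Nat.le_zero.1 hj, T.first, R.first]

theorem reachable (T R : RChain n) : (RNNI n).Reachable T R :=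
  SimpleGraph.reachable_of_edist_ne_top (ne_top_of_le_ne_top (by simp) (edist_le T R))

theorem dist_le (T R : RChain n) : (RNNI n).dist T R ≤ (n - 1).choose 2 := by
  have h := edist_le T R
  rwa [← (reachable T R).coe_dist_eq_edist, Nat.cast_le] at h

end RNNI

namespace RChain

variable {m : ℕ} (hm : 1 ≤ m) (x : Fin (m + 1))

-- The covering step at which `x` leaves its singleton block becomes an equality on the
-- remaining leaves, so it is skipped.
noncomputable def deleteLeaf (T : RChain (m + 1)) : RChain m where
  P i := (T.P (if i < rk T x then i else i + 1)).comap x.succAbove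
  first := by
    rw [if_pos (T.rk_pos (by omega)), T.first, Setoid.comap_succAbove_bot]
  last i hi := by
    have hrk := T.rk_le_sub_one (x := x) (by omega)
    split_ifs with h
    · have hsing : (T.P i).IsSingletonBlock x := (T.lt_rk_iff (by omega)).1 h
      have hcov : T.P i ⋖ ⊤ := T.last (i + 1) (by omega) ▸ T.step i (by omega)
      exact Setoid.eq_top_iff.2 fun u v => (Setoid.comap_rel _ _ _ _).2 <|
        Setoid.rel_of_covBy_top_of_isSingletonBlock hcov hsing (x.succAbove_ne u) (x.succAbove_ne v)
    · rw [T.last (i + 1) (by omega), Setoid.comap_top]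
  step i hi := by
    have hn : 2 ≤ m + 1 := by omega
    by_cases h₁ : i + 1 < rk T x
    · rw [if_pos (by omega), if_pos h₁]
      exact Setoid.comap_succAbove_covBy_of_isSingletonBlock x (T.step i (by omega))
        ((T.lt_rk_iff hn).1 h₁)
    rw [if_neg h₁]
    have hns : ¬ (T.P (i + 1)).IsSingletonBlock x := (T.rk_le_iff hn).1 (by omega)
    have hcov :=
      Setoid.comap_succAbove_covBy_of_not_isSingletonBlock x (T.step (i + 1) (by omega)) hns
    split_ifs with h₀
    · rwa [Setoid.comap_succAbove_eq_of_covBy x (T.step i (by omega)) ((T.lt_rk_iff hn).1 h₀)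
        hns]
    · exact hcov

theorem deleteLeaf_P (T : RChain (m + 1)) (i : ℕ) :
    (T.deleteLeaf hm x).P i = (T.P (if i < rk T x then i else i + 1)).comap x.succAbove := rfl

theorem deleteLeaf_eq_of_isSingletonBlock {T T' : RChain (m + 1)} {t : ℕ} (ht : 1 ≤ t)
    (heq : ∀ i ≠ t, T.P i = T'.P i) (hs : (T.P t).IsSingletonBlock x)
    (hs' : ¬ (T'.P t).IsSingletonBlock x) :
    rk T x = t + 1 ∧ rk T' x = t ∧ T.deleteLeaf hm x = T'.deleteLeaf hm x := by
  have hn : 2 ≤ m + 1 := by omega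
  have hT : t < rk T x := (T.lt_rk_iff hn).2 hs
  have hT' : rk T' x = t := by
    have : t - 1 < rk T' x := by
      rw [T'.lt_rk_iff hn, ← heq _ (by omega), ← T.lt_rk_iff hn]
      omega
    exact le_antisymm ((T'.rk_le_iff hn).2 hs') (by omega)
  have hT₁ : rk T x = t + 1 := by
    refine le_antisymm ((T.rk_le_iff hn).2 ?_) hT
    rw [heq _ (by omega), ← T'.rk_le_iff hn]
    omega
  have := T.rk_le_sub_one (x := x) hn
  refine ⟨hT₁, hT', ext_P (funext fun j => ?_)⟩
  rw [deleteLeaf_P, deleteLeaf_P, hT₁, hT']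
  rcases lt_trichotomy j t with hj | rfl | hj
  · rw [if_pos (by omega), if_pos hj, heq j (by omega)]
  · rw [if_pos (by omega), if_neg (lt_irrefl j), ← heq (j + 1) (by omega)]
    exact Setoid.comap_succAbove_eq_of_covBy x (T.step j (by omega)) hs
      ((T.rk_le_iff hn).1 (by omega))
  · rw [if_neg (by omega), if_neg (by omega), heq (j + 1) (by omega)]

theorem dist_deleteLeaf_add_dist_rk_le_one {T T' : RChain (m + 1)} (h : (RNNI (m + 1)).Adj T T') :
    (RNNI m).dist (T.deleteLeaf hm x) (T'.deleteLeaf hm x) + Nat.dist (rk T x) (rk T' x) ≤ 1 := by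
  obtain ⟨t, ht, heq⟩ := RNNI.exists_of_adj h
  by_cases hs : (T.P t).IsSingletonBlock x ↔ (T'.P t).IsSingletonBlock x
  · have hrk : rk T x = rk T' x := T.rk_eq_rk_of_forall_isSingletonBlock_iff (by omega) fun i => by
      rcases eq_or_ne i t with rfl | hi
      · exact hs
      · rw [heq i hi]
    have hidx : ∀ j, (T.deleteLeaf hm x).P j ≠ (T'.deleteLeaf hm x).P j →
        (if j < rk T x then j else j + 1) = t := fun j hj => by
      by_contra hne
      exact hj (by rw [deleteLeaf_P, deleteLeaf_P, ← hrk, heq _ hne])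
    have hsub : {j | (T.deleteLeaf hm x).P j ≠ (T'.deleteLeaf hm x).P j}.Subsingleton :=
      fun j hj k hk => by
        have := hidx j hj
        have := hidx k hk
        split_ifs at * <;> omega
    rcases RNNI.eq_or_adj_of_subsingleton hsub with he | hadj
    · simp [he, hrk]
    · simp [SimpleGraph.dist_eq_one_iff_adj.2 hadj, hrk]
  · rcases (by tauto : ((T.P t).IsSingletonBlock x ∧ ¬ (T'.P t).IsSingletonBlock x) ∨
        ((T'.P t).IsSingletonBlock x ∧ ¬ (T.P t).IsSingletonBlock x))
      with ⟨hs, hs'⟩ | ⟨hs, hs'⟩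
    · obtain ⟨hT, hT', he⟩ := deleteLeaf_eq_of_isSingletonBlock hm x ht heq hs hs'
      simp [he, hT, hT', Nat.dist]
    · obtain ⟨hT, hT', he⟩ :=
        deleteLeaf_eq_of_isSingletonBlock hm x ht (fun i hi => (heq i hi).symm) hs hs'
      simp [he, hT, hT', Nat.dist]

theorem dist_deleteLeaf_add_dist_rk_le (T R : RChain (m + 1)) :
    (RNNI m).dist (T.deleteLeaf hm x) (R.deleteLeaf hm x) + Nat.dist (rk T x) (rk R x) ≤
      (RNNI (m + 1)).dist T R := by
  suffices ∀ {T R} (W : (RNNI (m + 1)).Walk T R), (RNNI m).dist (T.deleteLeaf hm x)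
      (R.deleteLeaf hm x) + Nat.dist (rk T x) (rk R x) ≤ W.length by
    obtain ⟨W, hW⟩ := (RNNI.reachable T R).exists_walk_length_eq_dist
    exact hW ▸ this W
  intro T R W
  induction W with
  | nil => simp
  | @cons u v w h W ih =>
    have hstep := dist_deleteLeaf_add_dist_rk_le_one hm x h
    have hdist := (RNNI.reachable (u.deleteLeaf hm x) (v.deleteLeaf hm x)).dist_triangle_left
      (w.deleteLeaf hm x)
    have hrk := Nat.dist.triangle_inequality (rk u x) (rk v x) (rk w x)
    rw [SimpleGraph.Walk.length_cons]
    omega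

def insertLeaf (R : RChain m) : RChain (m + 1) where
  P i := if i < m then (R.P i).insertNth x else ⊤
  first := by rw [if_pos (by omega), R.first, Setoid.insertNth_bot]
  last i hi := if_neg (by omega)
  step i hi := by
    rw [if_pos (by omega)]
    split_ifs with h
    · exact Setoid.insertNth_covBy x (R.step i (by omega))
    · rw [R.last i (by omega)]
      exact Setoid.insertNth_top_covBy x hm

theorem rk_insertLeaf (R : RChain m) : rk (R.insertLeaf hm x) x = m := by
  refine eq_of_forall_ge_iff fun i => ?_
  rw [rk_le_iff _ (by omega)]
  change ¬ (if i < m then (R.P i).insertNth x else ⊤).IsSingletonBlock x ↔ m ≤ i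
  have : Nontrivial (Fin (m + 1)) := Fin.nontrivial_iff_two_le.2 (by omega)
  split_ifs with h
  · simp only [Setoid.isSingletonBlock_insertNth, not_true_eq_false, false_iff, not_le, h]
  · simp only [Setoid.not_isSingletonBlock_top, not_false_eq_true, true_iff]
    omega

theorem deleteLeaf_insertLeaf (R : RChain m) : (R.insertLeaf hm x).deleteLeaf hm x = R := by
  refine ext_P (funext fun j => ?_)
  rw [deleteLeaf_P, rk_insertLeaf]
  change Setoid.comap x.succAbove (if (if j < m then j else j + 1) < m then _ else ⊤) = _
  split_ifs with h₁ h₂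
  · exact Setoid.comap_insertNth x _
  · omega
  · rw [Setoid.comap_top, R.last j (by omega)]

theorem isCluster_insertLeaf {R : RChain m} {C : Set (Fin (m + 1))}
    (h : IsCluster (R.insertLeaf hm x) C) :
    C = Set.univ ∨ C = {x} ∨ ∃ D, IsCluster R D ∧ C = x.succAbove '' D := by
  obtain ⟨i, hC⟩ := h
  change C ∈ (if i < m then (R.P i).insertNth x else ⊤).classes at hC
  split_ifs at hC
  · rcases Setoid.mem_classes_insertNth x hC with rfl | ⟨D, hD, rfl⟩
    · exact Or.inr (Or.inl rfl)
    · exact Or.inr (Or.inr ⟨D, ⟨i, hD⟩, rfl⟩)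
  · exact Or.inl (Setoid.eq_univ_of_mem_classes_top hC)

theorem isCaterpillar_insertLeaf {R : RChain m} (h : IsCaterpillar R) :
    IsCaterpillar (R.insertLeaf hm x) := by
  intro C D hC hD hCs hDs
  rcases isCluster_insertLeaf hm x hC with rfl | rfl | ⟨C₀, hC₀, rfl⟩
  · exact Or.inr (Set.subset_univ D)
  · exact absurd Set.subsingleton_singleton hCs
  rcases isCluster_insertLeaf hm x hD with rfl | rfl | ⟨D₀, hD₀, rfl⟩
  · exact Or.inl (Set.subset_univ _)
  · exact absurd Set.subsingleton_singleton hDs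
  exact (h C₀ D₀ hC₀ hD₀ (fun hs => hCs (hs.image _)) fun hs => hDs (hs.image _)).imp
    (Set.image_mono ·) (Set.image_mono ·)

end RChain

theorem isCaterpillar_of_two (T : RChain 2) : IsCaterpillar T := by
  have huniv : ∀ C, IsCluster T C → ¬ C.Subsingleton → C = Set.univ := by
    rintro C ⟨i, hC⟩ hCs
    rcases Nat.eq_zero_or_pos i with rfl | hi
    · exact absurd (Setoid.subsingleton_of_mem_classes_bot (T.first ▸ hC)) hCs
    · exact Setoid.eq_univ_of_mem_classes_top (T.last i hi ▸ hC)
  intro C D hC hD hCs hDs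
  exact Or.inl (huniv D hD hDs ▸ Set.subset_univ C)

theorem exists_isCaterpillar_choose_le_dist {n : ℕ} (hn : 2 ≤ n) (T : RChain n) :
    ∃ R, IsCaterpillar R ∧ (n - 1).choose 2 ≤ (RNNI n).dist T R := by
  induction n, hn using Nat.le_induction with
  | base => exact ⟨T, isCaterpillar_of_two T, by simp⟩
  | succ m hm ih =>
    have hm₁ : 1 ≤ m := by omega
    obtain ⟨a, b, hab, hT₁⟩ := Setoid.exists_eq_merge_of_covBy (T.step 0 (by omega))
    have hrk : rk T a = 1 := by
      refine le_antisymm ((T.rk_le_iff (by omega)).2 fun h => ?_) (T.rk_pos (by omega))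
      refine hab ?_
      rw [h b (hT₁ ▸ Setoid.merge_rel_self), T.first]
    obtain ⟨R, hR, hdist⟩ := ih (T.deleteLeaf hm₁ a)
    refine ⟨R.insertLeaf hm₁ a, R.isCaterpillar_insertLeaf hm₁ a hR, ?_⟩
    have h := T.dist_deleteLeaf_add_dist_rk_le hm₁ a (R.insertLeaf hm₁ a)
    rw [RChain.deleteLeaf_insertLeaf, RChain.rk_insertLeaf, hrk] at h
    have hchoose : m.choose 2 = (m - 1).choose 2 + (m - 1) := by
      obtain ⟨k, rfl⟩ := Nat.exists_eq_add_of_le' hm₁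
      rw [Nat.add_sub_cancel, Nat.choose_succ_succ, Nat.choose_one_right, add_comm]
    simp only [Nat.add_sub_cancel, hchoose]
    have : Nat.dist 1 m = m - 1 := by simp [Nat.dist]; omega
    omega

/-- For every chain `T` in the RNNI graph on `n` leaves there is a caterpillar chain
at distance `(n-1)(n-2)/2` from it; consequently every vertex has eccentricity
`(n-1)(n-2)/2` and the radius of the RNNI graph equals its diameter `(n-1)(n-2)/2`. -/
theorem rnni_radius (n : ℕ) (hn : 2 ≤ n) (T : RChain n) :
    (∃ R : RChain n, IsCaterpillar R ∧ (RNNI n).dist T R = (n - 1) * (n - 2) / 2) ∧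
    (∀ R : RChain n, (RNNI n).dist T R ≤ (n - 1) * (n - 2) / 2) := by
  have hdiam : (n - 1) * (n - 2) / 2 = (n - 1).choose 2 := by
    rw [Nat.choose_two_right, Nat.sub_sub]
  rw [hdiam]
  obtain ⟨R, hR, hle⟩ := exists_isCaterpillar_choose_le_dist hn T
  exact ⟨⟨R, hR, le_antisymm (RNNI.dist_le T R) hle⟩, RNNI.dist_le T⟩
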